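/- Assume the HPPK DS setup: p ≥ 2, λ, n, m natural numbers with m ≥ 1; f₀,…,f_λ, h₀,…,h_λ and B_{t,j} (0 ≤ t ≤ n, 1 ≤ j ≤ m) natural numbers all less than p; p_{ij} = (∑_{s+t=i} f_s·B_{t,j}) mod p and q_{ij} = (∑_{s+t=i} h_s·B_{t,j}) mod p; S₁, S₂ ≥ p² with R₁ coprime to S₁, R₂ coprime to S₂ and inverses R₁', R₂'; P_{ij} = (R₁·p_{ij}) mod S₁, Q_{ij} = (R₂·q_{ij}) mod S₂; x₀ < p, α < p; F = (R₂'·((α·∑_s f_s x₀^s) mod p)) mod S₂ and H = (R₁'·((α·∑_s h_s x₀^s) mod p)) mod S₁. Let R be a positive integer with R ≥ S₁ and R ≥ S₂, and define the Barrett public-key elements μ_{ij} = ⌊R·P_{ij}/S₁⌋ and ν_{ij} = ⌊R·Q_{ij}/S₂⌋, together with s₁ = S₁ mod p, s₂ = S₂ mod p, p'_{ij} = P_{ij} mod p, q'_{ij} = Q_{ij} mod p. If for all i, j the floor equalities ⌊H·μ_{ij}/R⌋ = ⌊H·P_{ij}/S₁⌋ and ⌊F·ν_{ij}/R⌋ =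 ⌊F·Q_{ij}/S₂⌋ hold, then for all natural numbers u₁, …, u_m: ∑_{j=1}^{m} ∑_{i=0}^{n+λ} (F·q'_{ij} − s₂·⌊F·ν_{ij}/R⌋)·x₀^i·u_j ≡ ∑_{j=1}^{m} ∑_{i=0}^{n+λ} (H·p'_{ij} − s₁·⌊H·μ_{ij}/R⌋)·x₀^i·u_j (mod p), where the coefficient expressions are computed in the integers. -/

import Mathlib

/-!
Since `p² ≤ S₁`, the product `H · P_ij` taken modulo `S₁` is exactly
`(α h(x₀) mod p) · p_ij`: the factors `R₁'` and `R₁` cancel and no wrap-around occurs.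
Once the Barrett quotient equals the true quotient, `H · p'_ij - s₁ ⌊H μ_ij / R⌋` is
congruent modulo `p` to `H P_ij - S₁ ⌊H P_ij / S₁⌋ = H P_ij mod S₁`. The same holds on the
`F` side, and since `∑ᵢ p_ij x₀ⁱ ≡ f(x₀) B_j(x₀)`, both sides reduce modulo `p` to
`∑_j α f(x₀) h(x₀) B_j(x₀) u_j`.
-/

open Finset

theorem mod_mul_mod_mul_eq_of_modEq_one {S r r' a b : ℕ} (hr : r' * r ≡ 1 [MOD S])
    (hab : a * b < S) : (r' * a % S) * (r * b % S) % S = a * b := by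
  have h : (r' * a % S) * (r * b % S) ≡ a * b [MOD S] :=
    calc (r' * a % S) * (r * b % S) ≡ (r' * a) * (r * b) [MOD S] :=
          (Nat.mod_modEq _ S).mul (Nat.mod_modEq _ S)
      _ = (r' * r) * (a * b) := by ring
      _ ≡ 1 * (a * b) [MOD S] := hr.mul_right _
      _ = a * b := one_mul _
  exact Eq.trans h (Nat.mod_eq_of_lt hab)

theorem mod_mul_mod_lt_of_sq_le {p S : ℕ} (hp : 0 < p) (hS : p ^ 2 ≤ S) (a b : ℕ) :
    a % p * (b % p) < S :=
  (Nat.mul_lt_mul'' (Nat.mod_lt a hp) (Nat.mod_lt b hp)).trans_le (sq p ▸ hS)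

theorem mul_mod_sub_mod_mul_div_modEq (p X Y S : ℕ) :
    (X : ℤ) * ((Y % p : ℕ) : ℤ) - ((S % p : ℕ) : ℤ) * ((X * Y / S : ℕ) : ℤ)
      ≡ ((X * Y % S : ℕ) : ℤ) [ZMOD p] := by
  have h := congrArg (Nat.cast : ℕ → ZMod p) (Nat.mod_add_div (X * Y) S)
  generalize X * Y % S = r, X * Y / S = q at h ⊢
  rw [← ZMod.intCast_eq_intCast_iff]
  push_cast [ZMod.natCast_mod] at h ⊢
  linear_combination -h

def convCoeff {k l : ℕ} (c : Fin (k + 1) → ℕ) (b : Fin (l + 1) → ℕ) (i : ℕ) : ℕ :=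
  ∑ s : Fin (k + 1), ∑ t : Fin (l + 1), if (s : ℕ) + (t : ℕ) = i then c s * b t else 0

theorem sum_range_convCoeff_mul_pow {R : Type*} [CommSemiring R] {k l : ℕ}
    (c : Fin (k + 1) → ℕ) (b : Fin (l + 1) → ℕ) (x : R) :
    ∑ i ∈ range (l + k + 1), (convCoeff c b i : R) * x ^ i
      = (∑ s, (c s : R) * x ^ (s : ℕ)) * ∑ t, (b t : R) * x ^ (t : ℕ) := by
  have hmem (s : Fin (k + 1)) (t : Fin (l + 1)) : (s : ℕ) + t ∈ range (l + k + 1) := by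
    simp only [mem_range]; omega
  rw [sum_mul_sum]
  simp only [convCoeff, Nat.cast_sum, Nat.cast_ite, Nat.cast_mul, Nat.cast_zero, sum_mul,
    ite_mul, zero_mul]
  rw [sum_comm]
  refine sum_congr rfl fun s _ => ?_
  rw [sum_comm]
  refine sum_congr rfl fun t _ => ?_
  rw [sum_ite_eq, if_pos (hmem s t), pow_add]
  ring

theorem sum_mod_mul_convCoeff_mod_modEq_swap {k l : ℕ} (p α x u : ℕ)
    (f h : Fin (k + 1) → ℕ) (B : Fin (l + 1) → ℕ) :
    ∑ i ∈ range (l + k + 1),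
        (((α * ∑ s, f s * x ^ (s : ℕ)) % p * (convCoeff h B i % p) : ℕ) : ℤ)
          * (x : ℤ) ^ i * u
      ≡ ∑ i ∈ range (l + k + 1),
        (((α * ∑ s, h s * x ^ (s : ℕ)) % p * (convCoeff f B i % p) : ℕ) : ℤ)
          * (x : ℤ) ^ i * u [ZMOD p] := by
  have hfactor (a : Fin (k + 1) → ℕ) (c : Fin (k + 1) → ℕ) :
      ∑ i ∈ range (l + k + 1),
        ((((α * ∑ s, a s * x ^ (s : ℕ)) % p * (convCoeff c B i % p) : ℕ) : ℤ) : ZMod p)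
          * ((x : ℤ) : ZMod p) ^ i * ((u : ℤ) : ZMod p)
        = α * u * (∑ s, (a s : ZMod p) * (x : ZMod p) ^ (s : ℕ))
          * ((∑ s, (c s : ZMod p) * (x : ZMod p) ^ (s : ℕ))
            * ∑ t, (B t : ZMod p) * (x : ZMod p) ^ (t : ℕ)) := by
    rw [← sum_range_convCoeff_mul_pow, mul_sum (range _)]
    refine sum_congr rfl fun i _ => ?_
    push_cast [ZMod.natCast_mod]
    ring
  rw [← ZMod.intCast_eq_intCast_iff]
  push_cast only [Int.cast_sum, Int.cast_mul, Int.cast_pow]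
  rw [hfactor, hfactor]
  ring

theorem stmt_12_general (p lam n m : ℕ) (hp : 2 ≤ p)
    (fc hc : Fin (lam + 1) → ℕ) (Bc : Fin (n + 1) → Fin m → ℕ)
    (S₁ S₂ R₁ R₂ R₁' R₂' : ℕ)
    (hS₁ : p ^ 2 ≤ S₁) (hS₂ : p ^ 2 ≤ S₂)
    (hi₁ : R₁' * R₁ ≡ 1 [MOD S₁]) (hi₂ : R₂' * R₂ ≡ 1 [MOD S₂])
    (x₀ α : ℕ)
    (R : ℕ) :
    let pij : ℕ → Fin m → ℕ := fun i j =>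
      (∑ s : Fin (lam + 1), ∑ t : Fin (n + 1),
        if (s : ℕ) + (t : ℕ) = i then fc s * Bc t j else 0) % p
    let qij : ℕ → Fin m → ℕ := fun i j =>
      (∑ s : Fin (lam + 1), ∑ t : Fin (n + 1),
        if (s : ℕ) + (t : ℕ) = i then hc s * Bc t j else 0) % p
    let Pij : ℕ → Fin m → ℕ := fun i j => (R₁ * pij i j) % S₁
    let Qij : ℕ → Fin m → ℕ := fun i j => (R₂ * qij i j) % S₂
    let F := (R₂' * ((α * ∑ s : Fin (lam + 1), fc s * x₀ ^ (s : ℕ)) % p)) % S₂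
    let H := (R₁' * ((α * ∑ s : Fin (lam + 1), hc s * x₀ ^ (s : ℕ)) % p)) % S₁
    let μij : ℕ → Fin m → ℕ := fun i j => R * Pij i j / S₁
    let νij : ℕ → Fin m → ℕ := fun i j => R * Qij i j / S₂
    let s₁ := S₁ % p
    let s₂ := S₂ % p
    let p'ij : ℕ → Fin m → ℕ := fun i j => Pij i j % p
    let q'ij : ℕ → Fin m → ℕ := fun i j => Qij i j % p
    (∀ i < n + lam + 1, ∀ j : Fin m,
        H * μij i j / R = H * Pij i j / S₁ ∧ F * νij i j / R = F * Qij i j / S₂) →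
    ∀ u : Fin m → ℕ,
      (∑ j, ∑ i ∈ Finset.range (n + lam + 1),
          ((F : ℤ) * (q'ij i j : ℤ) - (s₂ : ℤ) * ((F * νij i j / R : ℕ) : ℤ)) *
            (x₀ : ℤ) ^ i * (u j : ℤ)) ≡
        (∑ j, ∑ i ∈ Finset.range (n + lam + 1),
          ((H : ℤ) * (p'ij i j : ℤ) - (s₁ : ℤ) * ((H * μij i j / R : ℕ) : ℤ)) *
            (x₀ : ℤ) ^ i * (u j : ℤ)) [ZMOD (p : ℤ)] := by
  intro pij qij Pij Qij F H μij νij s₁ s₂ p'ij q'ij hfloor u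
  have hp0 : 0 < p := by omega
  calc _ ≡ ∑ j, ∑ i ∈ range (n + lam + 1),
          (((α * ∑ s, fc s * x₀ ^ (s : ℕ)) % p * qij i j : ℕ) : ℤ)
            * (x₀ : ℤ) ^ i * u j [ZMOD p] := by
        gcongr with j _ i hi
        rw [(hfloor i (mem_range.1 hi) j).2,
          ← mod_mul_mod_mul_eq_of_modEq_one hi₂ (mod_mul_mod_lt_of_sq_le hp0 hS₂ _ _)]
        exact mul_mod_sub_mod_mul_div_modEq p F (Qij i j) S₂
    _ ≡ ∑ j, ∑ i ∈ range (n + lam + 1),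
          (((α * ∑ s, hc s * x₀ ^ (s : ℕ)) % p * pij i j : ℕ) : ℤ)
            * (x₀ : ℤ) ^ i * u j [ZMOD p] :=
        Int.ModEq.sum fun j _ =>
          sum_mod_mul_convCoeff_mod_modEq_swap p α x₀ (u j) fc hc (Bc · j)
    _ ≡ _ [ZMOD p] := by
        gcongr with j _ i hi
        rw [(hfloor i (mem_range.1 hi) j).1,
          ← mod_mul_mod_mul_eq_of_modEq_one hi₁ (mod_mul_mod_lt_of_sq_le hp0 hS₁ _ _)]
        exact (mul_mod_sub_mod_mul_div_modEq p H (Pij i j) S₁).symm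

/-- HPPK DS Barrett-based verification correctness: under the HPPK DS setup, if the
Barrett approximate quotients `⌊H·μ_{ij}/R⌋` and `⌊F·ν_{ij}/R⌋` coincide with the true
quotients `⌊H·P_{ij}/S₁⌋` and `⌊F·Q_{ij}/S₂⌋`, then the Barrett-form verification
equation holds modulo `p`, with the coefficient expressions computed in `ℤ`. -/
theorem stmt_12 (p lam n m : ℕ) (hp : 2 ≤ p) (hm : 1 ≤ m)
    (fc hc : Fin (lam + 1) → ℕ) (Bc : Fin (n + 1) → Fin m → ℕ)
    (hfc : ∀ s, fc s < p) (hhc : ∀ s, hc s < p) (hBc : ∀ t j, Bc t j < p)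
    (S₁ S₂ R₁ R₂ R₁' R₂' : ℕ)
    (hS₁ : p ^ 2 ≤ S₁) (hS₂ : p ^ 2 ≤ S₂) (hS₁pos : 0 < S₁) (hS₂pos : 0 < S₂)
    (hg₁ : Nat.gcd R₁ S₁ = 1) (hg₂ : Nat.gcd R₂ S₂ = 1)
    (hi₁ : R₁' * R₁ ≡ 1 [MOD S₁]) (hi₂ : R₂' * R₂ ≡ 1 [MOD S₂])
    (x₀ α : ℕ) (hx₀ : x₀ < p) (hα : α < p)
    (R : ℕ) (hRpos : 0 < R) (hRS₁ : S₁ ≤ R) (hRS₂ : S₂ ≤ R) :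
    let pij : ℕ → Fin m → ℕ := fun i j =>
      (∑ s : Fin (lam + 1), ∑ t : Fin (n + 1),
        if (s : ℕ) + (t : ℕ) = i then fc s * Bc t j else 0) % p
    let qij : ℕ → Fin m → ℕ := fun i j =>
      (∑ s : Fin (lam + 1), ∑ t : Fin (n + 1),
        if (s : ℕ) + (t : ℕ) = i then hc s * Bc t j else 0) % p
    let Pij : ℕ → Fin m → ℕ := fun i j => (R₁ * pij i j) % S₁
    let Qij : ℕ → Fin m → ℕ := fun i j => (R₂ * qij i j) % S₂
    let F := (R₂' * ((α * ∑ s : Fin (lam + 1), fc s * x₀ ^ (s : ℕ)) % p)) % S₂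
    let H := (R₁' * ((α * ∑ s : Fin (lam + 1), hc s * x₀ ^ (s : ℕ)) % p)) % S₁
    let μij : ℕ → Fin m → ℕ := fun i j => R * Pij i j / S₁
    let νij : ℕ → Fin m → ℕ := fun i j => R * Qij i j / S₂
    let s₁ := S₁ % p
    let s₂ := S₂ % p
    let p'ij : ℕ → Fin m → ℕ := fun i j => Pij i j % p
    let q'ij : ℕ → Fin m → ℕ := fun i j => Qij i j % p
    (∀ i < n + lam + 1, ∀ j : Fin m,
        H * μij i j / R = H * Pij i j / S₁ ∧ F * νij i j / R = F * Qij i j / S₂) →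
    ∀ u : Fin m → ℕ,
      (∑ j, ∑ i ∈ Finset.range (n + lam + 1),
          ((F : ℤ) * (q'ij i j : ℤ) - (s₂ : ℤ) * ((F * νij i j / R : ℕ) : ℤ)) *
            (x₀ : ℤ) ^ i * (u j : ℤ)) ≡
        (∑ j, ∑ i ∈ Finset.range (n + lam + 1),
          ((H : ℤ) * (p'ij i j : ℤ) - (s₁ : ℤ) * ((H * μij i j / R : ℕ) : ℤ)) *
            (x₀ : ℤ) ^ i * (u j : ℤ)) [ZMOD (p : ℤ)] :=
  stmt_12_general p lam n m hp fc hc Bc S₁ S₂ R₁ R₂ R₁' R₂' hS₁ hS₂ hi₁ hi₂ x₀ α R
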